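/- Let P, Q be programs and A a set of atoms. Then P ≡ᵘ_A Q (uniform equivalence relative to A) implies UE^A(P) = UE^A(Q); conversely, UE^A(P) = UE^A(Q) implies P ≡ᵘ_A Q whenever at least one of P, Q, or A is finite. -/

import Mathlib

structure Rule where
  head : Finset ℕ
  pos : Finset ℕ
  neg : Finset ℕ

abbrev Interp := Set ℕ
abbrev Program := Set Rule

/-- Classical satisfaction of a rule by an interpretation. -/
def Rule.satisfied (I : Interp) (r : Rule) : Prop :=
  ((↑r.pos ⊆ I) ∧ ∀ a ∈ r.neg, a ∉ I) → ∃ a ∈ r.head, a ∈ I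

/-- `I` is a classical model of the program `P`. -/
def Models (I : Interp) (P : Program) : Prop := ∀ r ∈ P, Rule.satisfied I r

/-- `X` models the Gelfond-Lifschitz reduct `P^Y`. -/
def ModelsReduct (X : Interp) (P : Program) (Y : Interp) : Prop :=
  ∀ r ∈ P, (∀ a ∈ r.neg, a ∉ Y) → (↑r.pos ⊆ X) → ∃ a ∈ r.head, a ∈ X

/-- `Y` is an answer set of `P`: a minimal model of the reduct `P^Y`. -/
def AnswerSet (P : Program) (Y : Interp) : Prop :=
  ModelsReduct Y P Y ∧ ∀ Z : Interp, Z ⊂ Y → ¬ ModelsReduct Z P Y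

/-- `(X,Y)` is an SE-model of `P`. -/
def SEModel (P : Program) (X Y : Interp) : Prop :=
  X ⊆ Y ∧ Models Y P ∧ ModelsReduct X P Y

/-- `(X,Y)` is a UE-model of `P`. -/
def UEModel (P : Program) (X Y : Interp) : Prop :=
  SEModel P X Y ∧ ∀ X', SEModel P X' Y → X ⊂ X' → X' = Y

/-- The program consisting of the atoms in `F` as facts. -/
def Facts (F : Set ℕ) : Program := { r | ∃ a ∈ F, r = ⟨{a}, ∅, ∅⟩ }

/-- Uniform equivalence of programs. -/
def UnifEquiv (P Q : Program) : Prop :=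
  ∀ F : Set ℕ, ∀ Y : Interp, AnswerSet (P ∪ Facts F) Y ↔ AnswerSet (Q ∪ Facts F) Y

/-- Strong equivalence of programs. -/
def StrongEquiv (P Q : Program) : Prop :=
  ∀ R : Program, ∀ Y : Interp, AnswerSet (P ∪ R) Y ↔ AnswerSet (Q ∪ R) Y

def Rule.atoms (r : Rule) : Finset ℕ := r.head ∪ r.pos ∪ r.neg

/-- All atoms occurring in `R` belong to `A`. -/
def ProgramOver (A : Set ℕ) (R : Program) : Prop := ∀ r ∈ R, ↑r.atoms ⊆ A

/-- Strong equivalence relative to a set of atoms `A`. -/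
def RelStrongEquiv (A : Set ℕ) (P Q : Program) : Prop :=
  ∀ R : Program, ProgramOver A R →
    ∀ Y : Interp, AnswerSet (P ∪ R) Y ↔ AnswerSet (Q ∪ R) Y

/-- Uniform equivalence relative to a set of atoms `A`. -/
def RelUnifEquiv (A : Set ℕ) (P Q : Program) : Prop :=
  ∀ F : Set ℕ, F ⊆ A →
    ∀ Y : Interp, AnswerSet (P ∪ Facts F) Y ↔ AnswerSet (Q ∪ Facts F) Y

/-- A unary rule: one head atom, no negation, at most one positive body atom. -/
def Unary (r : Rule) : Prop := r.head.card = 1 ∧ r.neg = ∅ ∧ r.pos.card ≤ 1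

/-- `(X,Y)` is a (relativized) `A`-SE-model of `P`. -/
def ASEModel (A : Set ℕ) (P : Program) (X Y : Interp) : Prop :=
  (X = Y ∨ X ⊂ Y ∩ A) ∧ Models Y P ∧
  (∀ Y' : Interp, Y' ⊂ Y → Y' ∩ A = Y ∩ A → ¬ ModelsReduct Y' P Y) ∧
  (X ⊂ Y → ∃ X' : Interp, X' ⊆ Y ∧ X' ∩ A = X ∧ ModelsReduct X' P Y)

/-- `(X,Y)` is a (relativized) `A`-UE-model of `P`. -/
def AUEModel (A : Set ℕ) (P : Program) (X Y : Interp) : Prop :=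
  ASEModel A P X Y ∧ ∀ X', ASEModel A P X' Y → X ⊂ X' → X' = Y

/-- A positive program: all rules have empty negative body. -/
def Positive (P : Program) : Prop := ∀ r ∈ P, r.neg = ∅

/-- Positive dependency: edge from a positive body atom to a head atom. -/
def Dep (P : Program) (a b : ℕ) : Prop := ∃ r ∈ P, a ∈ r.pos ∧ b ∈ r.head

/-- Head-cycle freeness: no directed cycle of the positive dependency graph
through two distinct head atoms of one rule. -/
def HCF (P : Program) : Prop :=
  ∀ r ∈ P, ∀ a ∈ r.head, ∀ b ∈ r.head, a ≠ b →
    ¬ (Relation.ReflTransGen (Dep P) a b ∧ Relation.ReflTransGen (Dep P) b a)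

/-- The shift of a single rule. -/
def Rule.shift (r : Rule) : Program :=
  if r.head = ∅ then {r}
  else { r' | ∃ a ∈ r.head, r' = ⟨{a}, r.pos, r.neg ∪ (r.head.erase a)⟩ }

/-- The shift of a program. -/
def shiftProg (P : Program) : Program := ⋃ r ∈ P, r.shift

/-- The set of SE-models of `P` as a set of pairs. -/
def SEset (P : Program) : Set (Interp × Interp) := { p | SEModel P p.1 p.2 }


/-!
For fixed `Y`, let `N_P(Y)` (`NonAnswerFacts A P Y`) be the family of sets `S ⊆ Y ∩ A` such that
`Y` is not an answer set of `P ∪ S`. When `Y` is an answer set of `P ∪ (Y ∩ A)`, `S ∈ N_P(Y)`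
exactly when some model `W ⊂ Y` of the reduct `P^Y` contains `S`, i.e. when `S` lies below some
proper `A`-SE-model `(W ∩ A, Y)`. Hence the `A`-UE-models `(X, Y)` with `X ≠ Y` are exactly the
maximal elements of `N_P(Y)`, so `UE^A(P)` only depends on the answer sets of the programs `P ∪ S`
with `S ⊆ A`.

Conversely, if `Y` is an answer set of `P ∪ F` but not of `Q ∪ F`, then `F ∈ N_Q(Y)`, and a
maximal `M ⊇ F` in `N_Q(Y)` gives the `A`-UE-model `(M, Y)` of `Q`, hence of `P`; yet `Y` is an
answer set of `P ∪ M` since `F ⊆ M ⊆ Y`. Finiteness provides `M`: `(Y ∩ A) \ F` lies inside `A`,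
or inside the atoms of `P`, or inside the atoms of `Q` unless some `a ∈ (Y ∩ A) \ F` does not occur
in `Q`, in which case `(Y ∩ A) \ {a}` is maximal in `N_Q(Y)`.
-/

open Set

lemma maximal_iff_of_forall_iff_exists_le {α : Type*} [PartialOrder α] {p q : α → Prop} {x : α}
    (hq : ∀ y, q y ↔ ∃ z, p z ∧ y ≤ z) : Maximal q x ↔ Maximal p x := by
  constructor
  · rintro ⟨hx, hmax⟩
    obtain ⟨z, hz, hxz⟩ := (hq x).1 hx
    obtain rfl : z = x := (hmax ((hq z).2 ⟨z, hz, le_rfl⟩) hxz).antisymm hxz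
    exact ⟨hz, fun y hy hxy => hmax ((hq y).2 ⟨y, hy, le_rfl⟩) hxy⟩
  · rintro ⟨hx, hmax⟩
    refine ⟨(hq x).2 ⟨x, hx, le_rfl⟩, fun y hy hxy => ?_⟩
    obtain ⟨z, hz, hyz⟩ := (hq y).1 hy
    exact hyz.trans (hmax hz (hxy.trans hyz))

lemma exists_le_maximal_of_finite_diff {α : Type*} {p : Set α → Prop} {F U : Set α}
    (hU : (U \ F).Finite) (hp : ∀ S, p S → S ⊆ U) (hF : p F) : ∃ M, F ⊆ M ∧ Maximal p M := by
  have hfin : {S | p S ∧ F ⊆ S}.Finite := by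
    refine (hU.finite_subsets.image (F ∪ ·)).subset ?_
    rintro S ⟨hS, hFS⟩
    exact ⟨S \ F, sdiff_subset_sdiff_left (hp S hS), union_sdiff_cancel hFS⟩
  obtain ⟨M, hFM, hM⟩ := hfin.exists_le_maximal ⟨hF, subset_rfl⟩
  exact ⟨M, hFM, hM.prop.1, fun S hS hMS => hM.2 ⟨hS, hFM.trans hMS⟩ hMS⟩

variable {A F S X Y Z : Set ℕ} {P Q : Program} {a : ℕ}

def Program.atoms (P : Program) : Set ℕ := ⋃ r ∈ P, (r.atoms : Set ℕ)

lemma Program.atoms_finite (hP : P.Finite) : P.atoms.Finite :=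
  hP.biUnion fun r _ => r.atoms.finite_toSet

lemma models_iff_modelsReduct_self : Models Y P ↔ ModelsReduct Y P Y :=
  forall₂_congr fun _ _ => ⟨fun h hneg hpos => h ⟨hpos, hneg⟩, fun h ⟨hpos, hneg⟩ => h hneg hpos⟩

lemma modelsReduct_union_facts :
    ModelsReduct Z (P ∪ Facts F) Y ↔ ModelsReduct Z P Y ∧ F ⊆ Z := by
  constructor
  · intro h
    refine ⟨fun r hr => h r (Or.inl hr), fun a ha => ?_⟩
    simpa using h ⟨{a}, ∅, ∅⟩ (Or.inr ⟨a, ha, rfl⟩) (by simp) (by simp)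
  · rintro ⟨hP, hF⟩ r (hr | ⟨a, ha, rfl⟩)
    · exact hP r hr
    · exact fun _ _ => ⟨a, Finset.mem_singleton_self a, hF ha⟩

lemma answerSet_union_facts_iff : AnswerSet (P ∪ Facts F) Y ↔
    Models Y P ∧ F ⊆ Y ∧ ∀ Z ⊂ Y, F ⊆ Z → ¬ ModelsReduct Z P Y := by
  simp only [AnswerSet, modelsReduct_union_facts, models_iff_modelsReduct_self, and_assoc]
  exact and_congr_right fun _ => and_congr_right fun _ =>
    forall₂_congr fun _ _ => ⟨fun h hF hZ => h ⟨hZ, hF⟩, fun h ⟨hZ, hF⟩ => h hF hZ⟩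

lemma not_answerSet_of_modelsReduct (hZY : Z ⊂ Y) (hFZ : F ⊆ Z) (hZ : ModelsReduct Z P Y) :
    ¬ AnswerSet (P ∪ Facts F) Y :=
  fun h => (answerSet_union_facts_iff.1 h).2.2 Z hZY hFZ hZ

lemma answerSet_union_facts_of_subset (h : AnswerSet (P ∪ Facts F) Y) (hFS : F ⊆ S)
    (hSY : S ⊆ Y) : AnswerSet (P ∪ Facts S) Y := by
  obtain ⟨hY, -, hmin⟩ := answerSet_union_facts_iff.1 h
  exact answerSet_union_facts_iff.2 ⟨hY, hSY, fun Z hZY hSZ => hmin Z hZY (hFS.trans hSZ)⟩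

lemma modelsReduct_diff_singleton (hZ : ModelsReduct Z P Y) (ha : a ∉ P.atoms) :
    ModelsReduct (Z \ {a}) P Y := by
  intro r hr hneg hpos
  obtain ⟨b, hb, hbZ⟩ := hZ r hr hneg (hpos.trans sdiff_subset)
  refine ⟨b, hb, hbZ, fun hba => ha ?_⟩
  rw [mem_singleton_iff.1 hba] at hb
  exact mem_biUnion hr (by simp [Rule.atoms, hb])

lemma subset_atoms_union_of_answerSet (h : AnswerSet (P ∪ Facts F) Y) : Y ⊆ P.atoms ∪ F := by
  intro a haY
  by_contra ha
  rw [mem_union, not_or] at ha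
  obtain ⟨hY, hFY, -⟩ := answerSet_union_facts_iff.1 h
  exact not_answerSet_of_modelsReduct (sdiff_singleton_ssubset.2 haY)
    (subset_sdiff_singleton hFY ha.2)
    (modelsReduct_diff_singleton (models_iff_modelsReduct_self.1 hY) ha.1) h

lemma ASEModel.subset (h : ASEModel A P X Y) : X ⊆ Y :=
  h.1.elim (·.le) fun h => h.1.trans inter_subset_left

lemma ASEModel.self (h : ASEModel A P X Y) : ASEModel A P Y Y :=
  ⟨Or.inl rfl, h.2.1, h.2.2.1, fun h => absurd h (ssubset_irrefl Y)⟩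

lemma aseModel_self_iff : ASEModel A P Y Y ↔ AnswerSet (P ∪ Facts (Y ∩ A)) Y := by
  have key : ∀ Z ⊆ Y, Z ∩ A = Y ∩ A ↔ Y ∩ A ⊆ Z := fun Z hZ =>
    ⟨fun h => h ▸ inter_subset_left,
      fun h => (inter_subset_inter_left A hZ).antisymm (subset_inter h inter_subset_right)⟩
  rw [answerSet_union_facts_iff]
  exact ⟨fun h => ⟨h.2.1, inter_subset_left, fun Z hZ hsub => h.2.2.1 Z hZ ((key Z hZ.1).2 hsub)⟩,
    fun ⟨hY, _, hmin⟩ => ⟨Or.inl rfl, hY, fun Z hZ heq => hmin Z hZ ((key Z hZ.1).1 heq),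
      fun h => absurd h (ssubset_irrefl Y)⟩⟩

lemma aueModel_iff_maximal_aseModel : AUEModel A P X Y ↔
    ASEModel A P Y Y ∧ (X = Y ∨ Maximal (fun X => ASEModel A P X Y ∧ X ≠ Y) X) := by
  simp only [maximal_iff_forall_ssuperset]
  constructor
  · rintro ⟨h, hmax⟩
    exact ⟨h.self, or_iff_not_imp_left.2 fun hXY =>
      ⟨⟨h, hXY⟩, fun X' hlt ⟨hX', hX'Y⟩ => hX'Y (hmax X' hX' hlt)⟩⟩
  · rintro ⟨hY, rfl | ⟨⟨hX, -⟩, hmax⟩⟩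
    · exact ⟨hY, fun X' hX' hlt => absurd hX'.subset hlt.not_subset⟩
    · exact ⟨hX, fun X' hX' hlt => by_contra fun hne => hmax hlt ⟨hX', hne⟩⟩

lemma not_answerSet_iff_exists_aseModel (hY : ASEModel A P Y Y) (hS : S ⊆ Y ∩ A) :
    ¬ AnswerSet (P ∪ Facts S) Y ↔ ∃ X, (ASEModel A P X Y ∧ X ≠ Y) ∧ S ⊆ X := by
  constructor
  · intro h
    obtain ⟨Z, hZY, hSZ, hZ⟩ : ∃ Z ⊂ Y, S ⊆ Z ∧ ModelsReduct Z P Y := by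
      simpa [answerSet_union_facts_iff, hY.2.1, hS.trans inter_subset_left] using h
    have hZA : Z ∩ A ⊂ Y ∩ A :=
      (inter_subset_inter_left A hZY.1).ssubset_of_ne fun h => hY.2.2.1 Z hZY h hZ
    exact ⟨Z ∩ A, ⟨⟨Or.inr hZA, hY.2.1, hY.2.2.1, fun _ => ⟨Z, hZY.1, rfl, hZ⟩⟩,
      (hZA.trans_subset inter_subset_left).ne⟩, subset_inter hSZ (hS.trans inter_subset_right)⟩
  · rintro ⟨X, ⟨hX, hXY⟩, hSX⟩
    have hXA := hX.1.resolve_left hXY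
    obtain ⟨W, hWY, rfl, hW⟩ := hX.2.2.2 (hXA.trans_subset inter_subset_left)
    exact not_answerSet_of_modelsReduct (hWY.ssubset_of_ne (by rintro rfl; exact hXA.ne rfl))
      (hSX.trans inter_subset_left) hW

def NonAnswerFacts (A : Set ℕ) (P : Program) (Y : Interp) (S : Set ℕ) : Prop :=
  S ⊆ Y ∩ A ∧ ¬ AnswerSet (P ∪ Facts S) Y

lemma maximal_nonAnswerFacts_iff (hY : ASEModel A P Y Y) :
    Maximal (NonAnswerFacts A P Y) X ↔ Maximal (fun X => ASEModel A P X Y ∧ X ≠ Y) X :=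
  maximal_iff_of_forall_iff_exists_le fun _ =>
    ⟨fun hS => (not_answerSet_iff_exists_aseModel hY hS.1).1 hS.2,
      fun ⟨X, ⟨hX, hXY⟩, hSX⟩ =>
        have hS := hSX.trans (hX.1.resolve_left hXY).subset
        ⟨hS, (not_answerSet_iff_exists_aseModel hY hS).2 ⟨X, ⟨hX, hXY⟩, hSX⟩⟩⟩

theorem aueModel_iff_nonAnswerFacts : AUEModel A P X Y ↔
    AnswerSet (P ∪ Facts (Y ∩ A)) Y ∧ (X = Y ∨ Maximal (NonAnswerFacts A P Y) X) := by
  rw [aueModel_iff_maximal_aseModel, ← aseModel_self_iff]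
  exact and_congr_right fun hY => by rw [maximal_nonAnswerFacts_iff hY]

lemma RelUnifEquiv.nonAnswerFacts_eq (h : RelUnifEquiv A P Q) :
    NonAnswerFacts A P Y = NonAnswerFacts A Q Y :=
  funext fun S => propext <| and_congr_right fun hS =>
    not_congr (h S (hS.trans inter_subset_right) Y)

theorem aueModel_iff_of_relUnifEquiv (h : RelUnifEquiv A P Q) :
    AUEModel A P X Y ↔ AUEModel A Q X Y := by
  rw [aueModel_iff_nonAnswerFacts, aueModel_iff_nonAnswerFacts, h _ inter_subset_right,
    h.nonAnswerFacts_eq]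

lemma maximal_nonAnswerFacts_diff_singleton (hY : AnswerSet (P ∪ Facts (Y ∩ A)) Y)
    (ha : a ∈ Y ∩ A) (haP : a ∉ P.atoms) : Maximal (NonAnswerFacts A P Y) ((Y ∩ A) \ {a}) := by
  have hYP := models_iff_modelsReduct_self.1 (answerSet_union_facts_iff.1 hY).1
  refine ⟨⟨sdiff_subset, not_answerSet_of_modelsReduct (sdiff_singleton_ssubset.2 ha.1)
    (sdiff_subset_sdiff_left inter_subset_left) (modelsReduct_diff_singleton hYP haP)⟩,
    fun S hS hsub => subset_sdiff_singleton hS.1 fun haS => hS.2 ?_⟩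
  rw [sdiff_singleton_subset_iff, insert_eq_of_mem haS] at hsub
  rwa [hS.1.antisymm hsub]

lemma exists_le_maximal_nonAnswerFacts (hfin : P.Finite ∨ Q.Finite ∨ A.Finite)
    (hP : AnswerSet (P ∪ Facts F) Y) (hQ : AnswerSet (Q ∪ Facts (Y ∩ A)) Y)
    (hF : NonAnswerFacts A Q Y F) : ∃ M, F ⊆ M ∧ Maximal (NonAnswerFacts A Q Y) M := by
  have hbound : ∀ S, NonAnswerFacts A Q Y S → S ⊆ Y ∩ A := fun _ hS => hS.1
  rcases hfin with hPfin | hQfin | hAfin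
  · refine exists_le_maximal_of_finite_diff ((Program.atoms_finite hPfin).subset ?_) hbound hF
    exact fun a ⟨⟨haY, _⟩, haF⟩ => (subset_atoms_union_of_answerSet hP haY).resolve_right haF
  · by_cases h : (Y ∩ A) \ F ⊆ Q.atoms
    · exact exists_le_maximal_of_finite_diff ((Program.atoms_finite hQfin).subset h) hbound hF
    · obtain ⟨a, ⟨haYA, haF⟩, haQ⟩ := not_subset.1 h
      exact ⟨_, subset_sdiff_singleton hF.1 haF,
        maximal_nonAnswerFacts_diff_singleton hQ haYA haQ⟩
  · exact exists_le_maximal_of_finite_diff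
      (hAfin.subset (sdiff_subset.trans inter_subset_right)) hbound hF

lemma answerSet_of_aueModel_iff (hfin : P.Finite ∨ Q.Finite ∨ A.Finite)
    (hUE : ∀ X Y, AUEModel A P X Y ↔ AUEModel A Q X Y) (hFA : F ⊆ A)
    (hP : AnswerSet (P ∪ Facts F) Y) : AnswerSet (Q ∪ Facts F) Y := by
  have hFYA : F ⊆ Y ∩ A := subset_inter (answerSet_union_facts_iff.1 hP).2.1 hFA
  have hPY := answerSet_union_facts_of_subset hP hFYA inter_subset_left
  have hQY : AnswerSet (Q ∪ Facts (Y ∩ A)) Y := by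
    have hQYY := (hUE Y Y).1 (aueModel_iff_nonAnswerFacts.2 ⟨hPY, Or.inl rfl⟩)
    exact (aueModel_iff_nonAnswerFacts.1 hQYY).1
  by_contra hQ
  obtain ⟨M, hFM, hM⟩ := exists_le_maximal_nonAnswerFacts hfin hP hQY ⟨hFYA, hQ⟩
  have hPM : AUEModel A P M Y := (hUE M Y).2 (aueModel_iff_nonAnswerFacts.2 ⟨hQY, Or.inr hM⟩)
  rcases (aueModel_iff_nonAnswerFacts.1 hPM).2 with rfl | hmaxP
  · rw [inter_eq_left.2 (hM.prop.1.trans inter_subset_right)] at hQY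
    exact hM.prop.2 hQY
  · exact hmaxP.prop.2
      (answerSet_union_facts_of_subset hP hFM (hmaxP.prop.1.trans inter_subset_left))

theorem stmt13 (P Q : Program) (A : Set ℕ) :
    (RelUnifEquiv A P Q → ∀ X Y : Interp, AUEModel A P X Y ↔ AUEModel A Q X Y) ∧
    ((P.Finite ∨ Q.Finite ∨ A.Finite) →
      (∀ X Y : Interp, AUEModel A P X Y ↔ AUEModel A Q X Y) → RelUnifEquiv A P Q) :=
  ⟨fun hU _ _ => aueModel_iff_of_relUnifEquiv hU, fun hfin hUE _ hFA _ =>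
    ⟨answerSet_of_aueModel_iff hfin hUE hFA,
      answerSet_of_aueModel_iff (or_left_comm.1 hfin) (fun X Y => (hUE X Y).symm) hFA⟩⟩
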